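/- Let γ ∈ (0, 1/2] and set M := Ī − γ𝐐'. Then M is symmetric, and for every integer τ ≥ 1 its spectral norm satisfies ‖M^τ‖ = (1 − γ(1 − λ₂))^τ. -/

import Mathlib

open Matrix Finset
open scoped Kronecker Matrix.Norms.L2Operator

noncomputable section

/-- The `nd × nd` averaging matrix `(1/n)(1ₙ1ₙᵀ ⊗ I_d)`. -/
def avgMat (n d : ℕ) : Matrix (Fin n × Fin d) (Fin n × Fin d) ℝ :=
  ((n : ℝ)⁻¹ • Matrix.of fun _ _ : Fin n => (1 : ℝ)) ⊗ₖ (1 : Matrix (Fin d) (Fin d) ℝ)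

/-- `Ī := I_{nd} − (1/n)(1ₙ1ₙᵀ ⊗ I_d)`. -/
def Ibar (n d : ℕ) : Matrix (Fin n × Fin d) (Fin n × Fin d) ℝ :=
  1 - avgMat n d

/-- `𝐐' := (Iₙ − Q) ⊗ I_d`. -/
def Qprime {n : ℕ} (Q : Matrix (Fin n) (Fin n) ℝ) (d : ℕ) :
    Matrix (Fin n × Fin d) (Fin n × Fin d) ℝ :=
  (1 - Q) ⊗ₖ (1 : Matrix (Fin d) (Fin d) ℝ)


/-! $M = B \otimes I_d$ with $B = I - J/n - \gamma (I - Q)$. Since $1^\top Q = 1^\top$, the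
all-ones vector is orthogonal to every eigenvector of $Q$ whose eigenvalue is not $1$, so it is a
multiple of the top eigenvector $v_1$. Hence $B$ is diagonal in the eigenbasis of $Q$, with
eigenvalue $0$ on $v_1$ and $1 - \gamma (1 - \lambda_i)$ on $v_i$ for $i \ge 2$. For
$\gamma \le 1/2$ these all lie in $[0, 1 - \gamma (1 - \lambda_2)]$, so $\|M^\tau\|$ is the
$\tau$-th power of that bound. -/

open Unitary

namespace Matrix

variable {ι κ : Type*}

theorem sub_kronecker {R l m : Type*} [Ring R] (A B : Matrix ι l R) (C : Matrix κ m R) :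
    (A - B) ⊗ₖ C = A ⊗ₖ C - B ⊗ₖ C := by
  ext
  simp [sub_mul]

theorem diagonal_kronecker_one {R : Type*} [DecidableEq ι] [DecidableEq κ] [MulZeroOneClass R]
    (v : ι → R) : diagonal v ⊗ₖ (1 : Matrix κ κ R) = diagonal fun p => v p.1 := by
  rw [← diagonal_one, diagonal_kronecker_diagonal]
  simp

theorem vecMulVec_single_single {R : Type*} [DecidableEq ι] [MulZeroClass R] (i : ι) (a b : R) :
    vecMulVec (Pi.single i a) (Pi.single i b) = diagonal (Pi.single i (a * b)) := by
  ext j k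
  by_cases hj : j = i <;> by_cases hk : k = i <;>
    simp_all [vecMulVec_apply, diagonal_apply, eq_comm]

theorem dotProduct_eq_zero_of_vecMul_eq_smul_of_mulVec_eq_smul [Fintype ι] {K : Type*} [Field K]
    {A : Matrix ι ι K} {u v : ι → K} {a b : K} (hu : u ᵥ* A = a • u) (hv : A *ᵥ v = b • v)
    (hab : a ≠ b) : u ⬝ᵥ v = 0 := by
  have h : a * (u ⬝ᵥ v) = b * (u ⬝ᵥ v) := by
    rw [← smul_eq_mul, ← smul_dotProduct, ← hu, ← dotProduct_mulVec, hv, dotProduct_smul,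
      smul_eq_mul]
  exact (mul_eq_mul_right_iff.mp h).resolve_left hab

variable [Fintype ι] [DecidableEq ι]

theorem l2_opNorm_conjStarAlgAut {𝕜 : Type*} [RCLike 𝕜] (U : unitary (Matrix ι ι 𝕜))
    (A : Matrix ι ι 𝕜) : ‖conjStarAlgAut 𝕜 _ U A‖ = ‖A‖ := by
  rw [conjStarAlgAut_apply, CStarRing.norm_mul_mem_unitary _ (Unitary.star_mem U.2),
    CStarRing.norm_mem_unitary_mul _ U.2]

theorem l2_opNorm_pow_conjStarAlgAut_diagonal {𝕜 : Type*} [RCLike 𝕜] (U : unitary (Matrix ι ι 𝕜))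
    {v : ι → 𝕜} {C : ℝ} (hle : ∀ i, ‖v i‖ ≤ C) (i : ι) (hi : ‖v i‖ = C) (τ : ℕ) :
    ‖conjStarAlgAut 𝕜 _ U (diagonal v) ^ τ‖ = C ^ τ := by
  have hC : 0 ≤ C := hi ▸ norm_nonneg _
  rw [← map_pow, l2_opNorm_conjStarAlgAut, diagonal_pow, l2_opNorm_diagonal]
  refine le_antisymm ((pi_norm_le_iff_of_nonneg (pow_nonneg hC τ)).2 fun j => ?_) ?_
  · simpa using pow_le_pow_left₀ (norm_nonneg _) (hle j) τ
  · simpa [hi] using norm_le_pi_norm (v ^ τ) i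

variable [Fintype κ] [DecidableEq κ] {R : Type*} [CommRing R] [StarRing R]

theorem kronecker_one_mem_unitary {U : Matrix ι ι R} (hU : U ∈ unitary (Matrix ι ι R)) :
    U ⊗ₖ (1 : Matrix κ κ R) ∈ unitary (Matrix (ι × κ) (ι × κ) R) := by
  have hstar : star (U ⊗ₖ (1 : Matrix κ κ R)) = star U ⊗ₖ 1 := by
    rw [star_eq_conjTranspose, conjTranspose_kronecker, conjTranspose_one, star_eq_conjTranspose]
  rw [Unitary.mem_iff, hstar, ← mul_kronecker_mul, ← mul_kronecker_mul,
    Unitary.star_mul_self_of_mem hU, Unitary.mul_star_self_of_mem hU, mul_one, one_kronecker_one]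
  simp

theorem conjStarAlgAut_kronecker_one (U : unitary (Matrix ι ι R)) (A : Matrix ι ι R) :
    conjStarAlgAut R _ ⟨U ⊗ₖ (1 : Matrix κ κ R), kronecker_one_mem_unitary U.2⟩ (A ⊗ₖ 1) =
      conjStarAlgAut R _ U A ⊗ₖ 1 := by
  simp only [conjStarAlgAut_apply, star_eq_conjTranspose, conjTranspose_kronecker,
    conjTranspose_one, ← mul_kronecker_mul, mul_one]

namespace IsHermitian

variable {A : Matrix ι ι ℝ} (hA : A.IsHermitian)
include hA

theorem ones_eq_conjStarAlgAut_diagonal_single (hA1 : 1 ᵥ* A = 1) {i₀ : ι}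
    (heig : ∀ i ≠ i₀, hA.eigenvalues i ≠ 1) :
    (of fun _ _ => 1 : Matrix ι ι ℝ) = conjStarAlgAut ℝ _ hA.eigenvectorUnitary
      (diagonal (Pi.single i₀ (Fintype.card ι : ℝ))) := by
  set U : Matrix ι ι ℝ := ↑hA.eigenvectorUnitary
  -- the coordinates of the all-ones vector in the eigenbasis
  set c : ι → ℝ := 1 ᵥ* U
  have hstar : star U = Uᵀ := by
    rw [star_eq_conjTranspose, conjTranspose_eq_transpose_of_trivial]
  have hc : c = Pi.single i₀ (c i₀) := by
    ext i
    rcases eq_or_ne i i₀ with rfl | hi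
    · simp
    rw [Pi.single_eq_of_ne hi]
    exact dotProduct_eq_zero_of_vecMul_eq_smul_of_mulVec_eq_smul (a := 1)
      (by rw [hA1, one_smul]) (hA.mulVec_eigenvectorBasis i) (heig i hi).symm
  have hUc : U *ᵥ c = 1 := by
    rw [← vecMul_transpose, ← hstar, vecMul_vecMul,
      Unitary.mul_star_self_of_mem hA.eigenvectorUnitary.2, vecMul_one]
  have hcc : c i₀ * c i₀ = Fintype.card ι := by
    calc c i₀ * c i₀ = c ⬝ᵥ c := by rw [hc]; simp
      _ = 1 ⬝ᵥ (U *ᵥ c) := by rw [dotProduct_mulVec]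
      _ = Fintype.card ι := by simp [hUc]
  calc (of fun _ _ => 1 : Matrix ι ι ℝ) = vecMulVec (U *ᵥ c) (c ᵥ* star U) := by
        rw [hstar, vecMul_transpose, hUc]; ext; simp [vecMulVec_apply]
    _ = U * vecMulVec c c * star U := by rw [mul_vecMulVec, vecMulVec_mul]
    _ = _ := by rw [hc, vecMulVec_single_single, hcc]; rfl

theorem one_sub_smul_ones_sub_smul_one_sub_eq_conjStarAlgAut (hA1 : 1 ᵥ* A = 1) {i₀ : ι}
    (heig : ∀ i ≠ i₀, hA.eigenvalues i ≠ 1) (γ : ℝ) :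
    1 - (Fintype.card ι : ℝ)⁻¹ • (of fun _ _ => 1 : Matrix ι ι ℝ) - γ • (1 - A) =
      conjStarAlgAut ℝ _ hA.eigenvectorUnitary
        (diagonal fun i => 1 - γ * (1 - hA.eigenvalues i) - (Pi.single i₀ 1 : ι → ℝ) i) := by
  have : Nonempty ι := ⟨i₀⟩
  have hcard : (Fintype.card ι : ℝ) ≠ 0 := Nat.cast_ne_zero.mpr Fintype.card_ne_zero
  conv_lhs => rw [hA.spectral_theorem, hA.ones_eq_conjStarAlgAut_diagonal_single hA1 heig]
  rw [← map_one (conjStarAlgAut ℝ _ hA.eigenvectorUnitary), ← map_smul, ← map_sub, ← map_sub,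
    ← map_smul, ← map_sub]
  congr 1
  ext i j
  rcases eq_or_ne i j with rfl | hij
  · rcases eq_or_ne i i₀ with rfl | hi
    · simp [hcard]
    · simp [hi]
  · simp [hij]

end IsHermitian

end Matrix

theorem abs_one_sub_mul_one_sub_le {γ a b : ℝ} (hγ0 : 0 ≤ γ) (hγ1 : γ ≤ 1 / 2) (ha : -1 < a)
    (hab : a ≤ b) : |1 - γ * (1 - a)| ≤ 1 - γ * (1 - b) := by
  rw [abs_of_nonneg (by nlinarith)]
  nlinarith

/-- Let `γ ∈ (0, 1/2]` and set `M := Ī − γ𝐐'`.  Then `M` is symmetric,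
and for every integer `τ ≥ 1` its spectral norm satisfies
`‖M^τ‖ = (1 − γ(1 − λ₂))^τ`. -/
theorem spectral_norm_Mpow {n d : ℕ} (hn : 2 ≤ n) (hd : 1 ≤ d)
    (Q : Matrix (Fin n) (Fin n) ℝ)
    (hQcol : ∀ j, ∑ i, Q i j = 1)
    (hQherm : Q.IsHermitian)
    (hQsorted : ∀ i j : Fin n, i ≤ j → hQherm.eigenvalues j ≤ hQherm.eigenvalues i)
    (hQeig1 : hQherm.eigenvalues ⟨0, by omega⟩ = 1)
    (hQeig2 : hQherm.eigenvalues ⟨1, by omega⟩ < 1)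
    (hQeign : -1 < hQherm.eigenvalues ⟨n - 1, by omega⟩)
    (γ : ℝ) (hγ0 : 0 < γ) (hγ1 : γ ≤ 1 / 2) :
    (Ibar n d - γ • Qprime Q d).IsSymm ∧
      ∀ τ : ℕ, 1 ≤ τ →
        ‖(Ibar n d - γ • Qprime Q d) ^ τ‖ =
          (1 - γ * (1 - hQherm.eigenvalues ⟨1, by omega⟩)) ^ τ := by
  set ev := hQherm.eigenvalues
  set i₀ : Fin n := ⟨0, by omega⟩
  set i₁ : Fin n := ⟨1, by omega⟩
  set β := 1 - γ * (1 - ev i₁)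
  set μ : Fin n → ℝ := fun i => 1 - γ * (1 - ev i) - (Pi.single i₀ 1 : Fin n → ℝ) i
  have hev : ∀ i, -1 < ev i := fun i =>
    hQeign.trans_le (hQsorted _ _ (Fin.le_def.mpr (show i.val ≤ n - 1 by omega)))
  have hev₁ : ∀ i ≠ i₀, ev i ≤ ev i₁ := fun i hi =>
    hQsorted _ _ (Fin.le_def.mpr (Nat.one_le_iff_ne_zero.mpr (Fin.val_ne_iff.mpr hi)))
  have hβ : 0 ≤ β := (abs_nonneg _).trans (abs_one_sub_mul_one_sub_le hγ0.le hγ1 (hev i₁) le_rfl)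
  have hμ : ∀ i, ‖μ i‖ ≤ β := by
    intro i
    rcases eq_or_ne i i₀ with rfl | hi
    · simpa [μ, hQeig1] using hβ
    · simpa [μ, hi] using abs_one_sub_mul_one_sub_le hγ0.le hγ1 (hev i) (hev₁ i hi)
  have hμ₁ : ‖μ i₁‖ = β := by simp [μ, β, i₀, i₁, Pi.single_apply, abs_of_nonneg hβ]
  have hQ1 : (1 : Fin n → ℝ) ᵥ* Q = 1 := funext fun j => by simpa [vecMul, dotProduct] using hQcol j
  set W : unitary (Matrix (Fin n × Fin d) (Fin n × Fin d) ℝ) :=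
    ⟨_, kronecker_one_mem_unitary hQherm.eigenvectorUnitary.2⟩
  have hM : Ibar n d - γ • Qprime Q d = conjStarAlgAut ℝ _ W (diagonal fun p => μ p.1) := by
    rw [← diagonal_kronecker_one, conjStarAlgAut_kronecker_one,
      ← hQherm.one_sub_smul_ones_sub_smul_one_sub_eq_conjStarAlgAut hQ1
        (fun i hi => ((hev₁ i hi).trans_lt hQeig2).ne) γ, Fintype.card_fin]
    simp only [Ibar, avgMat, Qprime, sub_kronecker, smul_kronecker, one_kronecker_one]
  refine ⟨?_, fun τ _ => ?_⟩
  · rw [← isHermitian_iff_isSymm, isHermitian_iff_isSelfAdjoint, hM]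
    exact (isHermitian_diagonal _).isSelfAdjoint.map _
  · rw [hM]
    exact l2_opNorm_pow_conjStarAlgAut_diagonal W (fun p => hμ p.1) (i₁, ⟨0, hd⟩) hμ₁ τ
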